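/- For every natural number s ≥ 1 and every natural number n, the sequence (A_n) satisfies A_{5n} = (s^2 + 4)^2·A_n^5 + 5·(s^2 + 4)·(-1)^n·A_n^3 + 5·A_n. -/
import Mathlib


def aseq (s : ℕ) : ℕ → ℤ
  | 0 => 0
  | 1 => 1
  | n + 2 => s * aseq s (n + 1) + aseq s n

lemma aseq_rec (s n : ℕ) : aseq s (n + 2) = s * aseq s (n + 1) + aseq s n := rfl

lemma aseq_add (s m n : ℕ) :
    aseq s (m + n) = aseq s m * aseq s (n + 1) +
      (aseq s (m + 1) - s * aseq s m) * aseq s n := by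
  induction m using Nat.twoStepInduction with
  | zero => simp [aseq]
  | one =>
    show aseq s (1 + n) = _
    rw [Nat.add_comm 1 n]
    simp [aseq, aseq_rec]
  | more m ih1 ih2 =>
    rw [show m + 2 + n = (m + n) + 2 by ring, aseq_rec,
      show m + n + 1 = (m + 1) + n by ring, ih1, ih2, aseq_rec s (m + 1), aseq_rec s m]
    push_cast
    ring

lemma aseq_cassini (s n : ℕ) :
    aseq s (n + 1) ^ 2 - s * aseq s (n + 1) * aseq s n - aseq s n ^ 2 = (-1 : ℤ) ^ n := by
  induction n with
  | zero => simp [aseq]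
  | succ n ih =>
    rw [aseq_rec, pow_succ]
    linear_combination (-1 : ℤ) * ih

theorem aseq_five_mul (s : ℕ) (hs : 1 ≤ s) (n : ℕ) :
    aseq s (5 * n) = ((s : ℤ) ^ 2 + 4) ^ 2 * aseq s n ^ 5 +
      5 * ((s : ℤ) ^ 2 + 4) * (-1 : ℤ) ^ n * aseq s n ^ 3 + 5 * aseq s n := by
  have H2 : aseq s (2 * n) = aseq s n * aseq s (n + 1) +
      (aseq s (n + 1) - s * aseq s n) * aseq s n := by
    rw [two_mul]; exact aseq_add s n n
  have H3 : aseq s (2 * n + 1) = aseq s n * (s * aseq s (n + 1) + aseq s n) +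
      (aseq s (n + 1) - s * aseq s n) * aseq s (n + 1) := by
    have h := aseq_add s n (n + 1)
    rw [show n + (n + 1) = 2 * n + 1 by ring, aseq_rec] at h
    exact h
  have H4 : aseq s (4 * n) = aseq s (2 * n) * aseq s (2 * n + 1) +
      (aseq s (2 * n + 1) - s * aseq s (2 * n)) * aseq s (2 * n) := by
    rw [show 4 * n = 2 * n + 2 * n by ring]; exact aseq_add s (2 * n) (2 * n)
  have H5 : aseq s (4 * n + 1) = aseq s (2 * n) * (s * aseq s (2 * n + 1) + aseq s (2 * n)) +
      (aseq s (2 * n + 1) - s * aseq s (2 * n)) * aseq s (2 * n + 1) := by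
    have h := aseq_add s (2 * n) (2 * n + 1)
    rw [show 2 * n + (2 * n + 1) = 4 * n + 1 by ring, aseq_rec] at h
    exact h
  have H6 : aseq s (5 * n) = aseq s (4 * n) * aseq s (n + 1) +
      (aseq s (4 * n + 1) - s * aseq s (4 * n)) * aseq s n := by
    rw [show 5 * n = 4 * n + n by ring]; exact aseq_add s (4 * n) n
  have hc := aseq_cassini s n
  have he : ((-1 : ℤ) ^ n) ^ 2 = 1 := by
    rw [← pow_mul]; exact Even.neg_one_pow ⟨n, by ring⟩
  have heD : (aseq s (n + 1) ^ 2 - s * aseq s (n + 1) * aseq s n - aseq s n ^ 2) ^ 2 = 1 := by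
    rw [hc]; exact he
  rw [H6, H5, H4, H3, H2, ← hc]
  linear_combination 5 * aseq s n * heD
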